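/- arXiv:1711.03885 — 3 statements merged into one kernel-verified Lean document; each statement's English description precedes it below -/
import Mathlib

section
/- Let C₁ and C₂ be two (μ,p,q)-clusters in a graph G with monotone μ. If C₁ ∩ C₂ ≠ ∅, then at least one of C₁ \ C₂ and C₂ \ C₁ is also a (μ,p,q)-cluster. -/
open Finset

/-- The set of edges of `G` with exactly one endpoint in `X`. -/
def cutSet {V : Type*} [Fintype V] [DecidableEq V] (G : SimpleGraph V) [DecidableRel G.Adj]
    (X : Finset V) : Finset (Sym2 V) :=
  G.edgeFinset.filter (fun e =>
    ∃ a ∈ (univ : Finset V), ∃ b ∈ (univ : Finset V), e = s(a, b) ∧ a ∈ X ∧ b ∉ X)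

/-- `d(X)`: the number of edges of `G` leaving `X`. -/
def cutCard {V : Type*} [Fintype V] [DecidableEq V] (G : SimpleGraph V) [DecidableRel G.Adj]
    (X : Finset V) : ℕ :=
  (cutSet G X).card

lemma cond_iff {V : Type*} [Fintype V] [DecidableEq V] (X : Finset V) (a b : V) :
    (∃ a' ∈ (univ : Finset V), ∃ b' ∈ (univ : Finset V), s(a,b) = s(a',b') ∧ a' ∈ X ∧ b' ∉ X) ↔
      ((a ∈ X ∧ b ∉ X) ∨ (b ∈ X ∧ a ∉ X)) := by
  constructor
  · rintro ⟨a', -, b', -, heq, ha, hb⟩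
    rw [Sym2.eq_iff] at heq
    rcases heq with ⟨rfl, rfl⟩ | ⟨rfl, rfl⟩ <;> tauto
  · rintro (⟨ha, hb⟩ | ⟨hb, ha⟩)
    exacts [⟨a, mem_univ _, b, mem_univ _, rfl, ha, hb⟩,
      ⟨b, mem_univ _, a, mem_univ _, Sym2.eq_swap, hb, ha⟩]

lemma posimod {V : Type*} [Fintype V] [DecidableEq V] (G : SimpleGraph V) [DecidableRel G.Adj]
    (A B : Finset V) :
    cutCard G (A \ B) + cutCard G (B \ A) ≤ cutCard G A + cutCard G B := by
  unfold cutCard cutSet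
  rw [Finset.card_filter, Finset.card_filter, Finset.card_filter, Finset.card_filter,
    ← Finset.sum_add_distrib, ← Finset.sum_add_distrib]
  apply Finset.sum_le_sum
  intro e _
  induction e using Sym2.ind with
  | _ a b =>
    simp only [cond_iff]
    simp only [Finset.mem_sdiff]
    by_cases haA : a ∈ A <;> by_cases haB : a ∈ B <;> by_cases hbA : b ∈ A <;>
      by_cases hbB : b ∈ B <;> simp [haA, haB, hbA, hbB]

/-- If two `(μ,p,q)`-clusters intersect, then one of the two differences is also a
`(μ,p,q)`-cluster. -/
theorem cluster_uncross {V : Type*} [Fintype V] [DecidableEq V]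
    (G : SimpleGraph V) [DecidableRel G.Adj] (μ : Finset V → ℕ)
    (hmono : ∀ X Y : Finset V, X ⊆ Y → μ X ≤ μ Y) (p q : ℕ)
    (C₁ C₂ : Finset V)
    (h₁ : μ C₁ ≤ p ∧ cutCard G C₁ ≤ q) (h₂ : μ C₂ ≤ p ∧ cutCard G C₂ ≤ q)
    (hint : (C₁ ∩ C₂).Nonempty) :
    (μ (C₁ \ C₂) ≤ p ∧ cutCard G (C₁ \ C₂) ≤ q) ∨
    (μ (C₂ \ C₁) ≤ p ∧ cutCard G (C₂ \ C₁) ≤ q) := by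
  have hpos := posimod G C₁ C₂
  have hμ₁ : μ (C₁ \ C₂) ≤ p := le_trans (hmono _ _ (sdiff_subset)) h₁.1
  have hμ₂ : μ (C₂ \ C₁) ≤ p := le_trans (hmono _ _ (sdiff_subset)) h₂.1
  by_cases h : cutCard G (C₁ \ C₂) ≤ q
  · exact Or.inl ⟨hμ₁, h⟩
  · refine Or.inr ⟨hμ₂, ?_⟩
    omega
end

section
/- Let C be a v-minimal set of a finite graph G and let S be the vertex set of a connected component of G[C]. Then S is itself a v-minimal set. -/
open Finset

/-- `C` is a `v`-minimal set: `C` is nonempty, `v ∉ C`, and every proper subset `C' ⊂ C`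
satisfies `d(C' ∪ {v}) > d(C ∪ {v})`. -/
def VMinimal {V : Type*} [Fintype V] [DecidableEq V] (G : SimpleGraph V)
    [DecidableRel G.Adj] (v : V) (C : Finset V) : Prop :=
  C.Nonempty ∧ v ∉ C ∧
    ∀ C' : Finset V, C' ⊂ C → cutCard G (insert v C) < cutCard G (insert v C')

lemma mem_cutSet_iff {V : Type*} [Fintype V] [DecidableEq V] (G : SimpleGraph V)
    [DecidableRel G.Adj] (Y : Finset V) (a b : V) :
    s(a, b) ∈ cutSet G Y ↔ G.Adj a b ∧ ((a ∈ Y ∧ b ∉ Y) ∨ (b ∈ Y ∧ a ∉ Y)) := by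
  rw [cutSet, mem_filter, SimpleGraph.mem_edgeFinset, SimpleGraph.mem_edgeSet]
  refine and_congr_right fun _ => ⟨?_, ?_⟩
  · rintro ⟨x, -, y, -, hxy, hx, hy⟩
    rw [Sym2.eq_iff] at hxy
    rcases hxy with ⟨rfl, rfl⟩ | ⟨rfl, rfl⟩ <;> tauto
  · rintro (⟨h1, h2⟩ | ⟨h1, h2⟩)
    exacts [⟨a, mem_univ a, b, mem_univ b, rfl, h1, h2⟩,
      ⟨b, mem_univ b, a, mem_univ a, Sym2.eq_swap, h1, h2⟩]


lemma keyProp (av as' as ac bv bs' bs bc : Prop)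
    (h1 : as' → as) (h2 : bs' → bs) (h3 : as → ac) (h4 : bs → bc)
    (h5 : ac → ¬av) (h6 : bc → ¬bv)
    (hx1 : as → bc → bs) (hx2 : bs → ac → as) :
    ((((av ∨ (ac ∧ ¬as) ∨ as') ∧ ¬(bv ∨ (bc ∧ ¬bs) ∨ bs') ∨
       (bv ∨ (bc ∧ ¬bs) ∨ bs') ∧ ¬(av ∨ (ac ∧ ¬as) ∨ as')) ∨
      ((av ∨ as) ∧ ¬(bv ∨ bs) ∨ (bv ∨ bs) ∧ ¬(av ∨ as))) →
     (((av ∨ ac) ∧ ¬(bv ∨ bc) ∨ (bv ∨ bc) ∧ ¬(av ∨ ac)) ∨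
      ((av ∨ as') ∧ ¬(bv ∨ bs') ∨ (bv ∨ bs') ∧ ¬(av ∨ as')))) ∧
    ((((av ∨ (ac ∧ ¬as) ∨ as') ∧ ¬(bv ∨ (bc ∧ ¬bs) ∨ bs') ∨
       (bv ∨ (bc ∧ ¬bs) ∨ bs') ∧ ¬(av ∨ (ac ∧ ¬as) ∨ as')) ∧
      ((av ∨ as) ∧ ¬(bv ∨ bs) ∨ (bv ∨ bs) ∧ ¬(av ∨ as))) →
     (((av ∨ ac) ∧ ¬(bv ∨ bc) ∨ (bv ∨ bc) ∧ ¬(av ∨ ac)) ∧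
      ((av ∨ as') ∧ ¬(bv ∨ bs') ∨ (bv ∨ bs') ∧ ¬(av ∨ as')))) := by
  classical
  by_cases hav : av <;> by_cases hbv : bv <;> by_cases has : as <;> by_cases hbs : bs <;>
    by_cases hac : ac <;> by_cases hbc : bc <;> by_cases has' : as' <;> by_cases hbs' : bs' <;>
    simp_all

/-- The vertex set of any connected component of `G[C]`, for a `v`-minimal set `C`, is
itself a `v`-minimal set. -/
theorem vMinimal_component {V : Type*} [Fintype V] [DecidableEq V]
    (G : SimpleGraph V) [DecidableRel G.Adj] (v : V) (C : Finset V)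
    (hC : VMinimal G v C)
    (S : Finset V) (hSC : S ⊆ C) (hSne : S.Nonempty)
    (hSconn : (G.induce (S : Set V)).Connected)
    (hSmax : ∀ a ∈ S, ∀ b ∈ C, G.Adj a b → b ∈ S) :
    VMinimal G v S := by
  obtain ⟨hCne, hvC, hmin⟩ := hC
  refine ⟨hSne, fun h => hvC (hSC h), ?_⟩
  intro S' hS'
  have hS'S : S' ⊆ S := hS'.subset
  have hS'C : S' ⊆ C := hS'S.trans hSC
  have hT : (C \ S) ∪ S' ⊂ C := by
    obtain ⟨x, hxS, hxS'⟩ := exists_of_ssubset hS'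
    refine ssubset_iff_of_subset (union_subset (sdiff_subset) hS'C) |>.mpr ⟨x, hSC hxS, ?_⟩
    simp only [mem_union, mem_sdiff]
    tauto
  have h1 := hmin _ hT
  set X := insert v ((C \ S) ∪ S') with hX
  set A := insert v C with hA
  set B := insert v S with hB
  set B' := insert v S' with hB'
  have key : ∀ a b : V, G.Adj a b →
      ((((a ∈ X ∧ b ∉ X) ∨ (b ∈ X ∧ a ∉ X)) ∨ ((a ∈ B ∧ b ∉ B) ∨ (b ∈ B ∧ a ∉ B))) →
        (((a ∈ A ∧ b ∉ A) ∨ (b ∈ A ∧ a ∉ A)) ∨ ((a ∈ B' ∧ b ∉ B') ∨ (b ∈ B' ∧ a ∉ B')))) ∧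
      ((((a ∈ X ∧ b ∉ X) ∨ (b ∈ X ∧ a ∉ X)) ∧ ((a ∈ B ∧ b ∉ B) ∨ (b ∈ B ∧ a ∉ B))) →
        (((a ∈ A ∧ b ∉ A) ∨ (b ∈ A ∧ a ∉ A)) ∧ ((a ∈ B' ∧ b ∉ B') ∨ (b ∈ B' ∧ a ∉ B')))) := by
    intro a b hab
    have hex1 : a ∈ S → b ∈ C → b ∈ S := fun h1 h2 => hSmax a h1 b h2 hab
    have hex2 : b ∈ S → a ∈ C → a ∈ S := fun h1 h2 => hSmax b h1 a h2 hab.symm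
    have ha1 : a ∈ S → a ∈ C := fun h => hSC h
    have hb1 : b ∈ S → b ∈ C := fun h => hSC h
    have ha2 : a ∈ S' → a ∈ S := fun h => hS'S h
    have hb2 : b ∈ S' → b ∈ S := fun h => hS'S h
    have ha3 : a ∈ C → ¬ a = v := fun h h' => hvC (h' ▸ h)
    have hb3 : b ∈ C → ¬ b = v := fun h h' => hvC (h' ▸ h)
    simp only [hX, hA, hB, hB', mem_insert, mem_union, mem_sdiff]
    exact keyProp (a = v) (a ∈ S') (a ∈ S) (a ∈ C) (b = v) (b ∈ S') (b ∈ S) (b ∈ C)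
      ha2 hb2 ha1 hb1 ha3 hb3 hex1 hex2
  have hsub1 : cutSet G X ∪ cutSet G B ⊆ cutSet G A ∪ cutSet G B' := by
    intro e
    induction e using Sym2.ind with
    | _ a b =>
      simp only [mem_union, mem_cutSet_iff]
      rintro (⟨hab, h⟩ | ⟨hab, h⟩)
      · rcases (key a b hab).1 (Or.inl h) with h' | h'
        exacts [Or.inl ⟨hab, h'⟩, Or.inr ⟨hab, h'⟩]
      · rcases (key a b hab).1 (Or.inr h) with h' | h'
        exacts [Or.inl ⟨hab, h'⟩, Or.inr ⟨hab, h'⟩]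
  have hsub2 : cutSet G X ∩ cutSet G B ⊆ cutSet G A ∩ cutSet G B' := by
    intro e
    induction e using Sym2.ind with
    | _ a b =>
      simp only [mem_inter, mem_cutSet_iff]
      rintro ⟨⟨hab, h⟩, ⟨-, h'⟩⟩
      obtain ⟨h1', h2'⟩ := (key a b hab).2 ⟨h, h'⟩
      exact ⟨⟨hab, h1'⟩, ⟨hab, h2'⟩⟩
  have h2 : cutCard G X + cutCard G B ≤ cutCard G A + cutCard G B' := by
    have e1 : cutCard G X + cutCard G B =
        (cutSet G X ∪ cutSet G B).card + (cutSet G X ∩ cutSet G B).card :=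
      (Finset.card_union_add_card_inter _ _).symm
    have e2 : cutCard G A + cutCard G B' =
        (cutSet G A ∪ cutSet G B').card + (cutSet G A ∩ cutSet G B').card :=
      (Finset.card_union_add_card_inter _ _).symm
    rw [e1, e2]
    exact Nat.add_le_add (card_le_card hsub1) (card_le_card hsub2)
  omega
end

section
/- For any finite graph G, vertex v and integer p ≥ 1, the number of v-minimal sets C such that |C| ≤ p and G[C] is connected is at most 4^p · |V(G)|. -/
open Finset

/-!
A connected `v`-minimal set `C` containing a vertex `u` is reached by a branching process that
starts from `S = {u}`, `F = ∅` and repeatedly takes a vertex outside `S ∪ F ∪ {v}` adjacent to `S`,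
putting it either into `S` (it lies in `C`) or into `F` (it does not). The vertices of `F` are
neighbours of `C` outside `C ∪ {v}`, so `v`-minimality forces `|F| < |C| ≤ p`; together with
`|S| ≤ p` this bounds the depth of the branching by `2p`, giving at most `4^p` sets per `u`.
-/

theorem SimpleGraph.exists_adj_notMem_of_connected_induce {V : Type*} {G : SimpleGraph V}
    {C S : Set V} (hconn : (G.induce C).Connected) (hSC : S ⊆ C) (hS : S.Nonempty)
    (hCS : ¬C ⊆ S) : ∃ s ∈ S, ∃ u ∈ C, u ∉ S ∧ G.Adj s u := by
  obtain ⟨s, hs⟩ := hS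
  obtain ⟨t, htC, htS⟩ := Set.not_subset.1 hCS
  obtain ⟨w⟩ := hconn.preconnected ⟨s, hSC hs⟩ ⟨t, htC⟩
  obtain ⟨d, -, hd, hd'⟩ := w.exists_boundary_dart {x | x.1 ∈ S} hs htS
  exact ⟨d.fst, hd, d.snd, d.snd.2, hd', d.adj⟩

section VMinimal

variable {V : Type*} [Fintype V] [DecidableEq V] (G : SimpleGraph V) [DecidableRel G.Adj]

lemma mem_cutSet {X : Finset V} {e : Sym2 V} :
    e ∈ cutSet G X ↔ ∃ a b, G.Adj a b ∧ a ∈ X ∧ b ∉ X ∧ e = s(a, b) := by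
  constructor
  · simp only [cutSet, mem_filter, mem_univ, true_and]
    rintro ⟨he, a, b, rfl, ha, hb⟩
    exact ⟨a, b, by simpa using he, ha, hb, rfl⟩
  · rintro ⟨a, b, hab, ha, hb, rfl⟩
    simp only [cutSet, mem_filter, SimpleGraph.mem_edgeFinset, SimpleGraph.mem_edgeSet]
    exact ⟨hab, a, mem_univ a, b, mem_univ b, rfl, ha, hb⟩

lemma cutCard_singleton_le {v : V} {C : Finset V} :
    cutCard G {v} ≤ #C + #{e ∈ cutSet G (insert v C) | v ∈ e} := by
  calc cutCard G {v}
      ≤ #(C.image (fun b => s(v, b)) ∪ {e ∈ cutSet G (insert v C) | v ∈ e}) := by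
        refine card_le_card fun e he => ?_
        obtain ⟨a, b, hab, ha, hb, rfl⟩ := (mem_cutSet G).1 he
        rw [mem_singleton] at ha hb
        subst ha
        by_cases hbC : b ∈ C
        · exact mem_union_left _ (mem_image_of_mem _ hbC)
        · refine mem_union_right _ (mem_filter.2 ⟨(mem_cutSet G).2 ?_, Sym2.mem_mk_left _ _⟩)
          exact ⟨a, b, hab, mem_insert_self _ _, by simp [hb, hbC], rfl⟩
    _ ≤ #C + #{e ∈ cutSet G (insert v C) | v ∈ e} :=
        (card_union_le _ _).trans (Nat.add_le_add_right card_image_le _)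

lemma card_le_card_cutSet_filter_notMem {v : V} {C F : Finset V} (hv : v ∉ C)
    (hF : ∀ f ∈ F, f ∉ insert v C ∧ ∃ s ∈ C, G.Adj s f) :
    #F ≤ #{e ∈ cutSet G (insert v C) | v ∉ e} := by
  choose! g hgC hg using fun f hf => (hF f hf).2
  refine card_le_card_of_injOn (fun f => s(g f, f)) (fun f hf => ?_) (fun f hf f' hf' h => ?_)
  · have hfv : f ≠ v := fun h => (hF f hf).1 (h ▸ mem_insert_self v C)
    refine mem_filter.2 ⟨(mem_cutSet G).2 ⟨g f, f, hg f hf, mem_insert_of_mem (hgC f hf),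
      (hF f hf).1, rfl⟩, ?_⟩
    rw [Sym2.mem_iff, not_or]
    exact ⟨fun h => hv (h ▸ hgC f hf), fun h => hfv h.symm⟩
  · rcases Sym2.eq_iff.1 h with ⟨-, h⟩ | ⟨h, -⟩
    · exact h
    · exact absurd (mem_insert_of_mem (h ▸ hgC f hf)) (hF f' hf').1

/-- The key fact `d̄(C, v) < |C|`, phrased through a set `F` of neighbours of `C` outside
`C ∪ {v}`: minimality against `C' = ∅` gives `d(C ∪ {v}) < d({v})`, and the edges at `v`
contribute at most `|C|` more to `d({v})` than to `d(C ∪ {v})`. -/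
theorem VMinimal.card_lt {v : V} {C F : Finset V} (hC : VMinimal G v C)
    (hF : ∀ f ∈ F, f ∉ insert v C ∧ ∃ s ∈ C, G.Adj s f) : #F < #C := by
  have hdrop : cutCard G (insert v C) < cutCard G {v} := by
    simpa using hC.2.2 ∅ (empty_ssubset.2 hC.1)
  have hsplit := card_filter_add_card_filter_not (s := cutSet G (insert v C)) (fun e => v ∈ e)
  have hat := cutCard_singleton_le G (v := v) (C := C)
  have haway := card_le_card_cutSet_filter_notMem G hC.2.1 hF
  unfold cutCard at hdrop hat
  omega

open scoped Classical in
noncomputable def connectedVMinimalSets (v : V) (p : ℕ) : Finset (Finset V) :=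
  (univ : Finset V).powerset.filter
    (fun C => VMinimal G v C ∧ C.card ≤ p ∧ (G.induce (C : Set V)).Connected)

open scoped Classical in
noncomputable def connectedVMinimalExtensions (v : V) (p : ℕ) (S F : Finset V) :
    Finset (Finset V) :=
  (connectedVMinimalSets G v p).filter (fun C => S ⊆ C ∧ Disjoint F C)

variable {G} {v : V} {p : ℕ}

lemma mem_connectedVMinimalSets {C : Finset V} :
    C ∈ connectedVMinimalSets G v p ↔
      VMinimal G v C ∧ #C ≤ p ∧ (G.induce (C : Set V)).Connected := by
  simp [connectedVMinimalSets]

lemma mem_connectedVMinimalExtensions {S F C : Finset V} :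
    C ∈ connectedVMinimalExtensions G v p S F ↔
      (VMinimal G v C ∧ #C ≤ p ∧ (G.induce (C : Set V)).Connected) ∧ S ⊆ C ∧ Disjoint F C := by
  simp [connectedVMinimalExtensions, mem_connectedVMinimalSets]

lemma connectedVMinimalExtensions_subset_union (S F : Finset V) (u : V) :
    connectedVMinimalExtensions G v p S F ⊆
      connectedVMinimalExtensions G v p (insert u S) F ∪
        connectedVMinimalExtensions G v p S (insert u F) := by
  intro C hC
  obtain ⟨hC, hSC, hFC⟩ := mem_connectedVMinimalExtensions.1 hC
  rw [mem_union, mem_connectedVMinimalExtensions, mem_connectedVMinimalExtensions]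
  by_cases huC : u ∈ C
  · exact Or.inl ⟨hC, insert_subset huC hSC, hFC⟩
  · exact Or.inr ⟨hC, hSC, disjoint_insert_left.2 ⟨huC, hFC⟩⟩

lemma connectedVMinimalExtensions_subset_singleton_of_card {S F : Finset V}
    (hF : ∀ f ∈ F, f ≠ v ∧ ∃ s ∈ S, G.Adj s f) (hcard : 2 * p ≤ #S + #F + 1) :
    connectedVMinimalExtensions G v p S F ⊆ {S} := by
  intro C hC
  obtain ⟨⟨hmin, hCp, -⟩, hSC, hFC⟩ := mem_connectedVMinimalExtensions.1 hC
  have hFC : #F < #C := hmin.card_lt G fun f hf =>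
    ⟨by simp [(hF f hf).1, disjoint_left.1 hFC hf],
      (hF f hf).2.imp fun s ⟨hs, hadj⟩ => ⟨hSC hs, hadj⟩⟩
  rw [mem_singleton]
  exact (eq_of_subset_of_card_le hSC (by omega)).symm

lemma connectedVMinimalExtensions_subset_singleton_of_closed {S F : Finset V} (hS : S.Nonempty)
    (hclosed : ∀ u, u ∉ S → u ∉ F → u ≠ v → ∀ s ∈ S, ¬G.Adj s u) :
    connectedVMinimalExtensions G v p S F ⊆ {S} := by
  intro C hC
  obtain ⟨⟨hmin, -, hconn⟩, hSC, hFC⟩ := mem_connectedVMinimalExtensions.1 hC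
  rw [mem_singleton]
  by_contra hne
  obtain ⟨s, hs, u, huC, huS, hadj⟩ := SimpleGraph.exists_adj_notMem_of_connected_induce hconn
    (coe_subset.2 hSC) (coe_nonempty.2 hS) (fun h => hne (coe_subset.1 h |>.antisymm hSC))
  exact hclosed u huS (fun h => disjoint_left.1 hFC h huC) (fun h => hmin.2.1 (h ▸ huC)) s hs hadj

/-- The paper's bound `2^(2p - |S| - |F| - 1)`, with the exponent `n` kept as a variable to
avoid truncated subtraction. -/
theorem card_connectedVMinimalExtensions_le (n : ℕ) {S F : Finset V} (hS : S.Nonempty)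
    (hF : ∀ f ∈ F, f ∉ S ∧ f ≠ v ∧ ∃ s ∈ S, G.Adj s f) (hn : 2 * p ≤ #S + #F + 1 + n) :
    #(connectedVMinimalExtensions G v p S F) ≤ 2 ^ n := by
  induction n generalizing S F with
  | zero =>
    have := hS.to_subtype
    exact card_le_one_iff_subset_singleton.2
      ⟨S, connectedVMinimalExtensions_subset_singleton_of_card (fun f hf => (hF f hf).2) hn⟩
  | succ n ih =>
    by_cases hclosed : ∀ u, u ∉ S → u ∉ F → u ≠ v → ∀ s ∈ S, ¬G.Adj s u
    · calc #(connectedVMinimalExtensions G v p S F) ≤ #({S} : Finset (Finset V)) :=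
            card_le_card (connectedVMinimalExtensions_subset_singleton_of_closed hS hclosed)
        _ ≤ 2 ^ (n + 1) := by simpa using Nat.one_le_two_pow
    push Not at hclosed
    obtain ⟨u, huS, huF, huv, s, hs, hsu⟩ := hclosed
    have hF_insert : ∀ f ∈ F, f ∉ insert u S ∧ f ≠ v ∧ ∃ s ∈ insert u S, G.Adj s f :=
      fun f hf => ⟨by rw [mem_insert, not_or]; exact ⟨fun h => huF (h ▸ hf), (hF f hf).1⟩,
        (hF f hf).2.1, (hF f hf).2.2.imp fun s ⟨hs, hadj⟩ => ⟨mem_insert_of_mem hs, hadj⟩⟩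
    have hin := ih (insert_nonempty u S) hF_insert (by rw [card_insert_of_notMem huS]; omega)
    have hout := ih hS (F := insert u F)
      (fun f hf => (mem_insert.1 hf).elim (fun h => h ▸ ⟨huS, huv, s, hs, hsu⟩) (hF f))
      (by rw [card_insert_of_notMem huF]; omega)
    calc #(connectedVMinimalExtensions G v p S F)
        ≤ #(connectedVMinimalExtensions G v p (insert u S) F ∪
            connectedVMinimalExtensions G v p S (insert u F)) :=
          card_le_card (connectedVMinimalExtensions_subset_union S F u)
      _ ≤ 2 ^ n + 2 ^ n := (card_union_le _ _).trans (Nat.add_le_add hin hout)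
      _ = 2 ^ (n + 1) := by ring

lemma connectedVMinimalSets_subset_biUnion :
    connectedVMinimalSets G v p ⊆
      univ.biUnion fun u => connectedVMinimalExtensions G v p {u} ∅ := by
  intro C hC
  obtain ⟨u, hu⟩ := (mem_connectedVMinimalSets.1 hC).1.1
  refine mem_biUnion.2 ⟨u, mem_univ u, mem_connectedVMinimalExtensions.2
    ⟨mem_connectedVMinimalSets.1 hC, singleton_subset_iff.2 hu, disjoint_empty_left C⟩⟩

end VMinimal

open scoped Classical in
theorem vMinimal_connected_count_general {V : Type*} [Fintype V] [DecidableEq V]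
    (G : SimpleGraph V) [DecidableRel G.Adj] (v : V) (p : ℕ) :
    ((univ : Finset V).powerset.filter
        (fun C => VMinimal G v C ∧ C.card ≤ p ∧ (G.induce (C : Set V)).Connected)).card
      ≤ 4 ^ p * Fintype.card V := by
  have hstart (u : V) : #(connectedVMinimalExtensions G v p {u} ∅) ≤ 4 ^ p := by
    rw [show 4 ^ p = 2 ^ (2 * p) by rw [pow_mul]; norm_num]
    exact card_connectedVMinimalExtensions_le _ (singleton_nonempty u) (by simp) (by simp)
  calc #(connectedVMinimalSets G v p)
      ≤ #(univ.biUnion fun u => connectedVMinimalExtensions G v p {u} ∅) :=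
        card_le_card connectedVMinimalSets_subset_biUnion
    _ ≤ Fintype.card V * 4 ^ p := card_biUnion_le_card_mul _ _ _ fun u _ => hstart u
    _ = 4 ^ p * Fintype.card V := Nat.mul_comm _ _

open scoped Classical in
/-- The number of connected `v`-minimal sets of size at most `p` is at most `4^p · n`. -/
theorem vMinimal_connected_count {V : Type*} [Fintype V] [DecidableEq V]
    (G : SimpleGraph V) [DecidableRel G.Adj] (v : V) (p : ℕ) (hp : 1 ≤ p) :
    ((univ : Finset V).powerset.filter
        (fun C => VMinimal G v C ∧ C.card ≤ p ∧ (G.induce (C : Set V)).Connected)).card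
      ≤ 4 ^ p * Fintype.card V :=
  vMinimal_connected_count_general G v p
end
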